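/- Fix an odd n ≥ 1 and b ∈ {0,1}^n, and let t be the number of indices with b_j = 1. Consider the 3-step step CRN with species x_j^T, x_j^F (1 ≤ j ≤ n), a^T, a^F, b^T, b^F, y^T, y^F and (2,0) rules x_j^T + a^F → ∅ and x_j^F + a^T → ∅ for each j, together with a^T + b^F → ∅, a^F + b^T → ∅, a^T + y^F → ∅, a^F + y^T → ∅. Step 1 starts from one copy of x_j^T (if b_j = 1) or x_j^F (if b_j = 0) for each j plus n copies each of a^T and a^F; step 2 adds ⌊n/2⌋ copies each of b^T and b^F; step 3 adds one copy each of y^T and y^F. Then every terminal configuration after step 3 contains at least one copy of y^T and zero copies of y^F if t > n/2, and at least one copy of y^F and zero copies of y^T if t < n/2. Hence this step CRN computes the n-input MAJORITY gate. -/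
import Mathlib


/-! ### Chemical Reaction Networks (CRNs) and step CRNs -/

/-- A reaction rule: an ordered pair of multisets (reactants, products). -/
structure Rule (Λ : Type) where
  reactants : Multiset Λ
  products : Multiset Λ
deriving DecidableEq

namespace Rule

/-- A `(2,0)` void rule: exactly two reactants and no products. -/
def IsVoid20 {Λ : Type} (R : Rule Λ) : Prop :=
  Multiset.card R.reactants = 2 ∧ R.products = 0

/-- A `(2,1)` catalytic rule: two reactants, one product which is one of the reactants. -/
def IsCat21 {Λ : Type} (R : Rule Λ) : Prop :=
  Multiset.card R.reactants = 2 ∧ Multiset.card R.products = 1 ∧ R.products ≤ R.reactants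

/-- A void rule: the products form a strict submultiset of the reactants. -/
def IsVoid {Λ : Type} (R : Rule Λ) : Prop := R.products < R.reactants

end Rule

/-- A single rule application: some rule of `Γ` is applicable to `C` and transforms it to `C'`. -/
def RStep {Λ : Type} [DecidableEq Λ] (Γ : Finset (Rule Λ)) (C C' : Multiset Λ) : Prop :=
  ∃ R ∈ Γ, R.reactants ≤ C ∧ C' = C - R.reactants + R.products

/-- Reachability: the reflexive-transitive closure of single rule application. -/
def Reaches {Λ : Type} [DecidableEq Λ] (Γ : Finset (Rule Λ)) : Multiset Λ → Multiset Λ → Prop :=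
  Relation.ReflTransGen (RStep Γ)

/-- A configuration is terminal if no rule of `Γ` is applicable to it. -/
def Terminal {Λ : Type} (Γ : Finset (Rule Λ)) (C : Multiset Λ) : Prop :=
  ∀ R ∈ Γ, ¬ R.reactants ≤ C

/-- The set of terminal configurations reachable from `S` after adding `s` (one step). -/
def stepTerm {Λ : Type} [DecidableEq Λ] (Γ : Finset (Rule Λ)) (S : Set (Multiset Λ)) (s : Multiset Λ) :
    Set (Multiset Λ) :=
  {T | ∃ c ∈ S, Reaches Γ (c + s) T ∧ Terminal Γ T}

/-- `TERM_k`: terminal configurations after running the step CRN with step sequence `ss`. -/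
def termAfter {Λ : Type} [DecidableEq Λ] (Γ : Finset (Rule Λ)) (ss : List (Multiset Λ)) : Set (Multiset Λ) :=
  ss.foldl (stepTerm Γ) {0}

/-- All configurations reachable during any step, starting from terminal sets `S`. -/
def reachDuring {Λ : Type} [DecidableEq Λ] (Γ : Finset (Rule Λ)) :
    Set (Multiset Λ) → List (Multiset Λ) → Set (Multiset Λ)
  | _, [] => ∅
  | S, s :: rest =>
      {C | ∃ c ∈ S, Reaches Γ (c + s) C} ∪ reachDuring Γ (stepTerm Γ S s) rest

/-- All configurations reachable at any step of the step CRN `(Γ, ss)`. -/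
def reachAll {Λ : Type} [DecidableEq Λ] (Γ : Finset (Rule Λ)) (ss : List (Multiset Λ)) : Set (Multiset Λ) :=
  reachDuring Γ {0} ss

/-- Add the input configuration `X` to the first step of the step sequence. -/
def addToHead {Λ : Type} (X : Multiset Λ) : List (Multiset Λ) → List (Multiset Λ)
  | [] => [X]
  | s :: rest => (X + s) :: rest

/-- Species for the `n`-input MAJORITY gate gadget. -/
inductive SpMAJ (n : ℕ) : Type
  | xT (j : Fin n)
  | xF (j : Fin n)
  | aT
  | aF
  | bT
  | bF
  | yT
  | yF
deriving DecidableEq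

/-- The `(2,0)` rules `x_j^T + a^F → ∅`, `x_j^F + a^T → ∅`, `a^T + b^F → ∅`, `a^F + b^T → ∅`,
`a^T + y^F → ∅`, `a^F + y^T → ∅`. -/
def majRules (n : ℕ) : Finset (Rule (SpMAJ n)) :=
  (Finset.univ.image fun j : Fin n => (⟨{SpMAJ.xT j, SpMAJ.aF}, 0⟩ : Rule (SpMAJ n))) ∪
  (Finset.univ.image fun j : Fin n => (⟨{SpMAJ.xF j, SpMAJ.aT}, 0⟩ : Rule (SpMAJ n))) ∪
  ({⟨{SpMAJ.aT, SpMAJ.bF}, 0⟩, ⟨{SpMAJ.aF, SpMAJ.bT}, 0⟩,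
    ⟨{SpMAJ.aT, SpMAJ.yF}, 0⟩, ⟨{SpMAJ.aF, SpMAJ.yT}, 0⟩} : Finset (Rule (SpMAJ n)))

namespace Stmt10Aux

variable {n : ℕ}

/-- total number of `xT` species in a configuration -/
def XT (C : Multiset (SpMAJ n)) : ℕ := ∑ j : Fin n, C.count (SpMAJ.xT j)
/-- total number of `xF` species in a configuration -/
def XF (C : Multiset (SpMAJ n)) : ℕ := ∑ j : Fin n, C.count (SpMAJ.xF j)

lemma XT_add (C D : Multiset (SpMAJ n)) : XT (C + D) = XT C + XT D := by
  simp [XT, Multiset.count_add, Finset.sum_add_distrib]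

lemma XF_add (C D : Multiset (SpMAJ n)) : XF (C + D) = XF C + XF D := by
  simp [XF, Multiset.count_add, Finset.sum_add_distrib]

lemma count_le_XT (j : Fin n) (C : Multiset (SpMAJ n)) : C.count (SpMAJ.xT j) ≤ XT C := by
  unfold XT; exact Finset.single_le_sum (f := fun i => C.count (SpMAJ.xT i)) (fun _ _ => Nat.zero_le _) (Finset.mem_univ j)

lemma count_le_XF (j : Fin n) (C : Multiset (SpMAJ n)) : C.count (SpMAJ.xF j) ≤ XF C := by
  unfold XF; exact Finset.single_le_sum (f := fun i => C.count (SpMAJ.xF i)) (fun _ _ => Nat.zero_le _) (Finset.mem_univ j)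

lemma XT_pos {C : Multiset (SpMAJ n)} (h : XT C ≠ 0) : ∃ j, 1 ≤ C.count (SpMAJ.xT j) := by
  by_contra hc
  push_neg at hc
  exact h (Finset.sum_eq_zero fun j _ => by have := hc j; omega)

lemma XF_pos {C : Multiset (SpMAJ n)} (h : XF C ≠ 0) : ∃ j, 1 ≤ C.count (SpMAJ.xF j) := by
  by_contra hc
  push_neg at hc
  exact h (Finset.sum_eq_zero fun j _ => by have := hc j; omega)

lemma XT_single_xT (j : Fin n) : XT ({SpMAJ.xT j} : Multiset (SpMAJ n)) = 1 := by
  rw [XT, Finset.sum_eq_single j]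
  · simp
  · intro i _ hij
    simp [Multiset.count_singleton, hij]
  · simp

lemma XF_single_xF (j : Fin n) : XF ({SpMAJ.xF j} : Multiset (SpMAJ n)) = 1 := by
  rw [XF, Finset.sum_eq_single j]
  · simp
  · intro i _ hij
    simp [Multiset.count_singleton, hij]
  · simp

lemma XT_single (s : SpMAJ n) (h : ∀ j, s ≠ SpMAJ.xT j) :
    XT ({s} : Multiset (SpMAJ n)) = 0 :=
  Finset.sum_eq_zero fun i _ => by
    rw [Multiset.count_singleton, if_neg fun e => h i e.symm]

lemma XF_single (s : SpMAJ n) (h : ∀ j, s ≠ SpMAJ.xF j) :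
    XF ({s} : Multiset (SpMAJ n)) = 0 :=
  Finset.sum_eq_zero fun i _ => by
    rw [Multiset.count_singleton, if_neg fun e => h i e.symm]

lemma XT_pair (u v : SpMAJ n) :
    XT ({u, v} : Multiset (SpMAJ n)) = XT {u} + XT {v} := by
  rw [Multiset.insert_eq_cons, ← Multiset.singleton_add, XT_add]

lemma XF_pair (u v : SpMAJ n) :
    XF ({u, v} : Multiset (SpMAJ n)) = XF {u} + XF {v} := by
  rw [Multiset.insert_eq_cons, ← Multiset.singleton_add, XF_add]

lemma reaches_rec {Λ : Type} [DecidableEq Λ] {Γ : Finset (Rule Λ)} {P : Multiset Λ → Prop}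
    {C D : Multiset Λ} (h : Reaches Γ C D) (h0 : P C)
    (hs : ∀ A B, P A → RStep Γ A B → P B) : P D := by
  induction h with
  | refl => exact h0
  | tail _ hstep ih => exact hs _ _ ih hstep

lemma pair_le {Λ : Type} [DecidableEq Λ] {u v : Λ} (huv : u ≠ v) {C : Multiset Λ}
    (hu : 1 ≤ C.count u) (hv : 1 ≤ C.count v) : ({u, v} : Multiset Λ) ≤ C := by
  rw [Multiset.le_iff_count]
  intro a
  rw [Multiset.insert_eq_cons, Multiset.count_cons, Multiset.count_singleton]
  by_cases hau : a = u <;> by_cases hav : a = v <;> simp_all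

lemma rstep_elim {C C' : Multiset (SpMAJ n)} (h : RStep (majRules n) C C') :
    ∃ u v : SpMAJ n, ({u, v} : Multiset (SpMAJ n)) ≤ C ∧ C' + {u, v} = C ∧
      ((∃ j, u = SpMAJ.xT j ∧ v = SpMAJ.aF) ∨ (∃ j, u = SpMAJ.xF j ∧ v = SpMAJ.aT) ∨
        (u = SpMAJ.aT ∧ v = SpMAJ.bF) ∨ (u = SpMAJ.aF ∧ v = SpMAJ.bT) ∨
        (u = SpMAJ.aT ∧ v = SpMAJ.yF) ∨ (u = SpMAJ.aF ∧ v = SpMAJ.yT)) := by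
  obtain ⟨R, hR, hle, hC'⟩ := h
  have hfix : ∀ u v : SpMAJ n, R = ⟨{u, v}, 0⟩ →
      ({u, v} : Multiset (SpMAJ n)) ≤ C ∧ C' + {u, v} = C := by
    rintro u v rfl
    simp only at hle hC'
    refine ⟨hle, ?_⟩
    rw [hC', add_zero, tsub_add_cancel_of_le hle]
  simp only [majRules, Finset.mem_union, Finset.mem_image, Finset.mem_univ, true_and,
    Finset.mem_insert, Finset.mem_singleton] at hR
  rcases hR with ((⟨j, hj⟩ | ⟨j, hj⟩) | (hj | hj | hj | hj)) <;>
    [ exact ⟨_, _, (hfix _ _ hj.symm).1, (hfix _ _ hj.symm).2, Or.inl ⟨j, rfl, rfl⟩⟩;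
      exact ⟨_, _, (hfix _ _ hj.symm).1, (hfix _ _ hj.symm).2, Or.inr (Or.inl ⟨j, rfl, rfl⟩)⟩;
      exact ⟨_, _, (hfix _ _ hj).1, (hfix _ _ hj).2, Or.inr (Or.inr (Or.inl ⟨rfl, rfl⟩))⟩;
      exact ⟨_, _, (hfix _ _ hj).1, (hfix _ _ hj).2, Or.inr (Or.inr (Or.inr (Or.inl ⟨rfl, rfl⟩)))⟩;
      exact ⟨_, _, (hfix _ _ hj).1, (hfix _ _ hj).2, Or.inr (Or.inr (Or.inr (Or.inr (Or.inl ⟨rfl, rfl⟩))))⟩;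
      exact ⟨_, _, (hfix _ _ hj).1, (hfix _ _ hj).2, Or.inr (Or.inr (Or.inr (Or.inr (Or.inr ⟨rfl, rfl⟩))))⟩ ]

lemma mem_rule1 (j : Fin n) : (⟨{SpMAJ.xT j, SpMAJ.aF}, 0⟩ : Rule (SpMAJ n)) ∈ majRules n := by
  simp [majRules]

lemma mem_rule2 (j : Fin n) : (⟨{SpMAJ.xF j, SpMAJ.aT}, 0⟩ : Rule (SpMAJ n)) ∈ majRules n := by
  simp [majRules]

lemma mem_rule3 : (⟨{SpMAJ.aT, SpMAJ.bF}, 0⟩ : Rule (SpMAJ n)) ∈ majRules n := by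
  simp [majRules]

lemma mem_rule4 : (⟨{SpMAJ.aF, SpMAJ.bT}, 0⟩ : Rule (SpMAJ n)) ∈ majRules n := by
  simp [majRules]

lemma mem_rule5 : (⟨{SpMAJ.aT, SpMAJ.yF}, 0⟩ : Rule (SpMAJ n)) ∈ majRules n := by
  simp [majRules]

lemma mem_rule6 : (⟨{SpMAJ.aF, SpMAJ.yT}, 0⟩ : Rule (SpMAJ n)) ∈ majRules n := by
  simp [majRules]

lemma terminal_zero {T : Multiset (SpMAJ n)} (hT : Terminal (majRules n) T)
    {u v : SpMAJ n} (huv : u ≠ v) (hmem : (⟨{u, v}, 0⟩ : Rule (SpMAJ n)) ∈ majRules n)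
    (hu : 1 ≤ T.count u) : T.count v = 0 := by
  by_contra hv
  exact hT _ hmem (pair_le huv hu (Nat.one_le_iff_ne_zero.2 hv))


lemma XT_nsmul (k : ℕ) (C : Multiset (SpMAJ n)) : XT (k • C) = k * XT C := by
  unfold XT; simp [Multiset.count_nsmul, Finset.mul_sum]

lemma XF_nsmul (k : ℕ) (C : Multiset (SpMAJ n)) : XF (k • C) = k * XF C := by
  unfold XF; simp [Multiset.count_nsmul, Finset.mul_sum]

@[simp] lemma XT_single_aT : XT ({SpMAJ.aT} : Multiset (SpMAJ n)) = 0 := XT_single _ (fun _ => by simp)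
@[simp] lemma XT_single_aF : XT ({SpMAJ.aF} : Multiset (SpMAJ n)) = 0 := XT_single _ (fun _ => by simp)
@[simp] lemma XT_single_bT : XT ({SpMAJ.bT} : Multiset (SpMAJ n)) = 0 := XT_single _ (fun _ => by simp)
@[simp] lemma XT_single_bF : XT ({SpMAJ.bF} : Multiset (SpMAJ n)) = 0 := XT_single _ (fun _ => by simp)
@[simp] lemma XT_single_yT : XT ({SpMAJ.yT} : Multiset (SpMAJ n)) = 0 := XT_single _ (fun _ => by simp)
@[simp] lemma XT_single_yF : XT ({SpMAJ.yF} : Multiset (SpMAJ n)) = 0 := XT_single _ (fun _ => by simp)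
@[simp] lemma XT_single_xF (j : Fin n) : XT ({SpMAJ.xF j} : Multiset (SpMAJ n)) = 0 := XT_single _ (fun _ => by simp)
@[simp] lemma XF_single_aT : XF ({SpMAJ.aT} : Multiset (SpMAJ n)) = 0 := XF_single _ (fun _ => by simp)
@[simp] lemma XF_single_aF : XF ({SpMAJ.aF} : Multiset (SpMAJ n)) = 0 := XF_single _ (fun _ => by simp)
@[simp] lemma XF_single_bT : XF ({SpMAJ.bT} : Multiset (SpMAJ n)) = 0 := XF_single _ (fun _ => by simp)
@[simp] lemma XF_single_bF : XF ({SpMAJ.bF} : Multiset (SpMAJ n)) = 0 := XF_single _ (fun _ => by simp)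
@[simp] lemma XF_single_yT : XF ({SpMAJ.yT} : Multiset (SpMAJ n)) = 0 := XF_single _ (fun _ => by simp)
@[simp] lemma XF_single_yF : XF ({SpMAJ.yF} : Multiset (SpMAJ n)) = 0 := XF_single _ (fun _ => by simp)
@[simp] lemma XF_single_xT (j : Fin n) : XF ({SpMAJ.xT j} : Multiset (SpMAJ n)) = 0 := XF_single _ (fun _ => by simp)

attribute [simp] XT_single_xT XF_single_xF

lemma XT_cons (a : SpMAJ n) (C : Multiset (SpMAJ n)) : XT (a ::ₘ C) = XT {a} + XT C := by
  rw [← Multiset.singleton_add, XT_add]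

lemma XF_cons (a : SpMAJ n) (C : Multiset (SpMAJ n)) : XF (a ::ₘ C) = XF {a} + XF C := by
  rw [← Multiset.singleton_add, XF_add]

/-- Invariant preserved during step 1. -/
lemma preserve1 (p q : ℕ) :
    ∀ A B : Multiset (SpMAJ n),
      (A.count SpMAJ.bT = 0 ∧ A.count SpMAJ.bF = 0 ∧ A.count SpMAJ.yT = 0 ∧
        A.count SpMAJ.yF = 0 ∧ A.count SpMAJ.aF = XT A + p ∧ A.count SpMAJ.aT = XF A + q) →
      RStep (majRules n) A B →
      (B.count SpMAJ.bT = 0 ∧ B.count SpMAJ.bF = 0 ∧ B.count SpMAJ.yT = 0 ∧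
        B.count SpMAJ.yF = 0 ∧ B.count SpMAJ.aF = XT B + p ∧ B.count SpMAJ.aT = XF B + q) := by
  rintro A B ⟨h1, h2, h3, h4, h5, h6⟩ hstep
  obtain ⟨u, v, hle, hAB, hcase⟩ := rstep_elim hstep
  have hcnt : ∀ a, A.count a = B.count a + (({u, v} : Multiset (SpMAJ n)).count a) :=
    fun a => by rw [← hAB, Multiset.count_add]
  have hXTe : XT A = XT B + XT ({u, v} : Multiset (SpMAJ n)) := by rw [← hAB, XT_add]
  have hXFe : XF A = XF B + XF ({u, v} : Multiset (SpMAJ n)) := by rw [← hAB, XF_add]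
  have hlecnt : ∀ a, (({u, v} : Multiset (SpMAJ n)).count a) ≤ A.count a :=
    fun a => Multiset.count_le_of_le a hle
  rcases hcase with ⟨j, rfl, rfl⟩ | ⟨j, rfl, rfl⟩ | ⟨rfl, rfl⟩ | ⟨rfl, rfl⟩ | ⟨rfl, rfl⟩ | ⟨rfl, rfl⟩
  · have e1 := hcnt SpMAJ.bT; have e2 := hcnt SpMAJ.bF; have e3 := hcnt SpMAJ.yT
    have e4 := hcnt SpMAJ.yF; have e5 := hcnt SpMAJ.aF; have e6 := hcnt SpMAJ.aT
    simp [Multiset.insert_eq_cons, Multiset.count_cons, Multiset.count_singleton] at e1 e2 e3 e4 e5 e6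
    rw [XT_pair] at hXTe; rw [XF_pair] at hXFe; simp at hXTe hXFe
    exact ⟨by omega, by omega, by omega, by omega, by omega, by omega⟩
  · have e1 := hcnt SpMAJ.bT; have e2 := hcnt SpMAJ.bF; have e3 := hcnt SpMAJ.yT
    have e4 := hcnt SpMAJ.yF; have e5 := hcnt SpMAJ.aF; have e6 := hcnt SpMAJ.aT
    simp [Multiset.insert_eq_cons, Multiset.count_cons, Multiset.count_singleton] at e1 e2 e3 e4 e5 e6
    rw [XT_pair] at hXTe; rw [XF_pair] at hXFe; simp at hXTe hXFe
    exact ⟨by omega, by omega, by omega, by omega, by omega, by omega⟩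
  · have := hlecnt SpMAJ.bF
    simp [Multiset.insert_eq_cons, Multiset.count_cons, Multiset.count_singleton] at this
    omega
  · have := hlecnt SpMAJ.bT
    simp [Multiset.insert_eq_cons, Multiset.count_cons, Multiset.count_singleton] at this
    omega
  · have := hlecnt SpMAJ.yF
    simp [Multiset.insert_eq_cons, Multiset.count_cons, Multiset.count_singleton] at this
    omega
  · have := hlecnt SpMAJ.yT
    simp [Multiset.insert_eq_cons, Multiset.count_cons, Multiset.count_singleton] at this
    omega

/-- Invariant preserved during step 2. -/
lemma preserve2 (a b c d : ℕ) :
    ∀ A B : Multiset (SpMAJ n),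
      (XT A = 0 ∧ XF A = 0 ∧ A.count SpMAJ.yT = 0 ∧ A.count SpMAJ.yF = 0 ∧
        A.count SpMAJ.aT + a = A.count SpMAJ.bF + b ∧
        A.count SpMAJ.aF + c = A.count SpMAJ.bT + d) →
      RStep (majRules n) A B →
      (XT B = 0 ∧ XF B = 0 ∧ B.count SpMAJ.yT = 0 ∧ B.count SpMAJ.yF = 0 ∧
        B.count SpMAJ.aT + a = B.count SpMAJ.bF + b ∧
        B.count SpMAJ.aF + c = B.count SpMAJ.bT + d) := by
  rintro A B ⟨h1, h2, h3, h4, h5, h6⟩ hstep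
  obtain ⟨u, v, hle, hAB, hcase⟩ := rstep_elim hstep
  have hcnt : ∀ a, A.count a = B.count a + (({u, v} : Multiset (SpMAJ n)).count a) :=
    fun a => by rw [← hAB, Multiset.count_add]
  have hXTe : XT A = XT B + XT ({u, v} : Multiset (SpMAJ n)) := by rw [← hAB, XT_add]
  have hXFe : XF A = XF B + XF ({u, v} : Multiset (SpMAJ n)) := by rw [← hAB, XF_add]
  have hlecnt : ∀ a, (({u, v} : Multiset (SpMAJ n)).count a) ≤ A.count a :=
    fun a => Multiset.count_le_of_le a hle
  rcases hcase with ⟨j, rfl, rfl⟩ | ⟨j, rfl, rfl⟩ | ⟨rfl, rfl⟩ | ⟨rfl, rfl⟩ | ⟨rfl, rfl⟩ | ⟨rfl, rfl⟩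
  · have := hlecnt (SpMAJ.xT j)
    have h' := count_le_XT j A
    simp [Multiset.insert_eq_cons, Multiset.count_cons, Multiset.count_singleton] at this
    omega
  · have := hlecnt (SpMAJ.xF j)
    have h' := count_le_XF j A
    simp [Multiset.insert_eq_cons, Multiset.count_cons, Multiset.count_singleton] at this
    omega
  · have e3 := hcnt SpMAJ.yT; have e4 := hcnt SpMAJ.yF; have e5 := hcnt SpMAJ.aT
    have e6 := hcnt SpMAJ.aF; have e7 := hcnt SpMAJ.bT; have e8 := hcnt SpMAJ.bF
    simp [Multiset.insert_eq_cons, Multiset.count_cons, Multiset.count_singleton] at e3 e4 e5 e6 e7 e8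
    rw [XT_pair] at hXTe; rw [XF_pair] at hXFe; simp at hXTe hXFe
    exact ⟨by omega, by omega, by omega, by omega, by omega, by omega⟩
  · have e3 := hcnt SpMAJ.yT; have e4 := hcnt SpMAJ.yF; have e5 := hcnt SpMAJ.aT
    have e6 := hcnt SpMAJ.aF; have e7 := hcnt SpMAJ.bT; have e8 := hcnt SpMAJ.bF
    simp [Multiset.insert_eq_cons, Multiset.count_cons, Multiset.count_singleton] at e3 e4 e5 e6 e7 e8
    rw [XT_pair] at hXTe; rw [XF_pair] at hXFe; simp at hXTe hXFe
    exact ⟨by omega, by omega, by omega, by omega, by omega, by omega⟩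
  · have := hlecnt SpMAJ.yF
    simp [Multiset.insert_eq_cons, Multiset.count_cons, Multiset.count_singleton] at this
    omega
  · have := hlecnt SpMAJ.yT
    simp [Multiset.insert_eq_cons, Multiset.count_cons, Multiset.count_singleton] at this
    omega

/-- Invariant preserved during step 3 (majority-true case). -/
lemma preserve3T (k : ℕ) :
    ∀ A B : Multiset (SpMAJ n),
      (XF A = 0 ∧ A.count SpMAJ.aF = 0 ∧ A.count SpMAJ.bF = 0 ∧
        A.count SpMAJ.yT = 1 ∧ A.count SpMAJ.aT = A.count SpMAJ.yF + k) →
      RStep (majRules n) A B →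
      (XF B = 0 ∧ B.count SpMAJ.aF = 0 ∧ B.count SpMAJ.bF = 0 ∧
        B.count SpMAJ.yT = 1 ∧ B.count SpMAJ.aT = B.count SpMAJ.yF + k) := by
  rintro A B ⟨h1, h2, h3, h4, h5⟩ hstep
  obtain ⟨u, v, hle, hAB, hcase⟩ := rstep_elim hstep
  have hcnt : ∀ a, A.count a = B.count a + (({u, v} : Multiset (SpMAJ n)).count a) :=
    fun a => by rw [← hAB, Multiset.count_add]
  have hXFe : XF A = XF B + XF ({u, v} : Multiset (SpMAJ n)) := by rw [← hAB, XF_add]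
  have hlecnt : ∀ a, (({u, v} : Multiset (SpMAJ n)).count a) ≤ A.count a :=
    fun a => Multiset.count_le_of_le a hle
  rcases hcase with ⟨j, rfl, rfl⟩ | ⟨j, rfl, rfl⟩ | ⟨rfl, rfl⟩ | ⟨rfl, rfl⟩ | ⟨rfl, rfl⟩ | ⟨rfl, rfl⟩
  · have := hlecnt SpMAJ.aF
    simp [Multiset.insert_eq_cons, Multiset.count_cons, Multiset.count_singleton] at this
    omega
  · have := hlecnt (SpMAJ.xF j)
    have h' := count_le_XF j A
    simp [Multiset.insert_eq_cons, Multiset.count_cons, Multiset.count_singleton] at this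
    omega
  · have := hlecnt SpMAJ.bF
    simp [Multiset.insert_eq_cons, Multiset.count_cons, Multiset.count_singleton] at this
    omega
  · have := hlecnt SpMAJ.aF
    simp [Multiset.insert_eq_cons, Multiset.count_cons, Multiset.count_singleton] at this
    omega
  · have e1 := hcnt SpMAJ.aF; have e2 := hcnt SpMAJ.bF; have e3 := hcnt SpMAJ.yT
    have e4 := hcnt SpMAJ.aT; have e5 := hcnt SpMAJ.yF
    simp [Multiset.insert_eq_cons, Multiset.count_cons, Multiset.count_singleton] at e1 e2 e3 e4 e5
    rw [XF_pair] at hXFe; simp at hXFe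
    exact ⟨by omega, by omega, by omega, by omega, by omega⟩
  · have := hlecnt SpMAJ.aF
    simp [Multiset.insert_eq_cons, Multiset.count_cons, Multiset.count_singleton] at this
    omega

/-- Invariant preserved during step 3 (majority-false case). -/
lemma preserve3F (k : ℕ) :
    ∀ A B : Multiset (SpMAJ n),
      (XT A = 0 ∧ A.count SpMAJ.aT = 0 ∧ A.count SpMAJ.bT = 0 ∧
        A.count SpMAJ.yF = 1 ∧ A.count SpMAJ.aF = A.count SpMAJ.yT + k) →
      RStep (majRules n) A B →
      (XT B = 0 ∧ B.count SpMAJ.aT = 0 ∧ B.count SpMAJ.bT = 0 ∧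
        B.count SpMAJ.yF = 1 ∧ B.count SpMAJ.aF = B.count SpMAJ.yT + k) := by
  rintro A B ⟨h1, h2, h3, h4, h5⟩ hstep
  obtain ⟨u, v, hle, hAB, hcase⟩ := rstep_elim hstep
  have hcnt : ∀ a, A.count a = B.count a + (({u, v} : Multiset (SpMAJ n)).count a) :=
    fun a => by rw [← hAB, Multiset.count_add]
  have hXTe : XT A = XT B + XT ({u, v} : Multiset (SpMAJ n)) := by rw [← hAB, XT_add]
  have hlecnt : ∀ a, (({u, v} : Multiset (SpMAJ n)).count a) ≤ A.count a :=
    fun a => Multiset.count_le_of_le a hle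
  rcases hcase with ⟨j, rfl, rfl⟩ | ⟨j, rfl, rfl⟩ | ⟨rfl, rfl⟩ | ⟨rfl, rfl⟩ | ⟨rfl, rfl⟩ | ⟨rfl, rfl⟩
  · have := hlecnt (SpMAJ.xT j)
    have h' := count_le_XT j A
    simp [Multiset.insert_eq_cons, Multiset.count_cons, Multiset.count_singleton] at this
    omega
  · have := hlecnt SpMAJ.aT
    simp [Multiset.insert_eq_cons, Multiset.count_cons, Multiset.count_singleton] at this
    omega
  · have := hlecnt SpMAJ.aT
    simp [Multiset.insert_eq_cons, Multiset.count_cons, Multiset.count_singleton] at this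
    omega
  · have := hlecnt SpMAJ.bT
    simp [Multiset.insert_eq_cons, Multiset.count_cons, Multiset.count_singleton] at this
    omega
  · have := hlecnt SpMAJ.aT
    simp [Multiset.insert_eq_cons, Multiset.count_cons, Multiset.count_singleton] at this
    omega
  · have e1 := hcnt SpMAJ.aT; have e2 := hcnt SpMAJ.bT; have e3 := hcnt SpMAJ.yF
    have e4 := hcnt SpMAJ.aF; have e5 := hcnt SpMAJ.yT
    simp [Multiset.insert_eq_cons, Multiset.count_cons, Multiset.count_singleton] at e1 e2 e3 e4 e5
    rw [XT_pair] at hXTe; simp at hXTe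
    exact ⟨by omega, by omega, by omega, by omega, by omega⟩

end Stmt10Aux

open Stmt10Aux

/-- The 3-step step CRN with the above `(2,0)` rules computes the `n`-input
MAJORITY gate (`n` odd): step 1 starts from one input species per bit plus `n` copies each of
`a^T, a^F`; step 2 adds `⌊n/2⌋` copies each of `b^T, b^F`; step 3 adds one copy each of
`y^T, y^F`. If more than half the input bits are 1 every terminal configuration after step 3
has at least one `y^T` and no `y^F`; if fewer than half are 1, at least one `y^F` and no `y^T`. -/
theorem stmt10 (n : ℕ) (hn : 1 ≤ n) (hodd : Odd n) (b : Fin n → Bool) :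
    ∀ T ∈ termAfter (majRules n)
      [(∑ j : Fin n, ({if b j then SpMAJ.xT j else SpMAJ.xF j} : Multiset (SpMAJ n)))
          + n • ({SpMAJ.aT} : Multiset (SpMAJ n)) + n • ({SpMAJ.aF} : Multiset (SpMAJ n)),
        (n / 2) • ({SpMAJ.bT} : Multiset (SpMAJ n)) + (n / 2) • ({SpMAJ.bF} : Multiset (SpMAJ n)),
        ({SpMAJ.yT} : Multiset (SpMAJ n)) + ({SpMAJ.yF} : Multiset (SpMAJ n))],
      (n < 2 * (Finset.univ.filter fun j => b j = true).card →
        1 ≤ T.count SpMAJ.yT ∧ T.count SpMAJ.yF = 0) ∧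
      (2 * (Finset.univ.filter fun j => b j = true).card < n →
        1 ≤ T.count SpMAJ.yF ∧ T.count SpMAJ.yT = 0) := by
  intro T hT
  simp only [termAfter, List.foldl, stepTerm, Set.mem_setOf_eq, Set.mem_singleton_iff] at hT
  obtain ⟨c2, ⟨c1, ⟨c0, hc0, hr1, hterm1⟩, hr2, hterm2⟩, hr3, hterm3⟩ := hT
  subst hc0
  rw [zero_add] at hr1
  set t := (Finset.univ.filter fun j => b j = true).card with ht
  obtain ⟨m, hm⟩ : ∃ m, n = 2 * m + 1 := by
    obtain ⟨k, hk⟩ := hodd; exact ⟨k, by omega⟩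
  have htn : t ≤ n := le_trans (Finset.card_filter_le _ _) (by simp)
  set X := ∑ j : Fin n, ({if b j then SpMAJ.xT j else SpMAJ.xF j} : Multiset (SpMAJ n)) with hX
  set s₁ := X + n • ({SpMAJ.aT} : Multiset (SpMAJ n)) + n • ({SpMAJ.aF} : Multiset (SpMAJ n)) with hs₁
  set s₂ := (n / 2) • ({SpMAJ.bT} : Multiset (SpMAJ n)) + (n / 2) • ({SpMAJ.bF} : Multiset (SpMAJ n)) with hs₂
  set s₃ := ({SpMAJ.yT} : Multiset (SpMAJ n)) + ({SpMAJ.yF} : Multiset (SpMAJ n)) with hs₃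
  -- counts of the input part X
  have hX0 : ∀ a : SpMAJ n, (∀ j, a ≠ SpMAJ.xT j ∧ a ≠ SpMAJ.xF j) → X.count a = 0 := by
    intro a ha
    rw [hX, Multiset.count_sum']
    refine Finset.sum_eq_zero fun j _ => ?_
    by_cases h : b j <;>
      simp [h, Multiset.count_singleton, (ha j).1, (ha j).2]
  have hXxT : ∀ i, X.count (SpMAJ.xT i) = if b i then 1 else 0 := by
    intro i
    rw [hX, Multiset.count_sum', Finset.sum_eq_single i]
    · by_cases h : b i <;> simp [h]
    · intro j _ hji
      by_cases h : b j <;> simp [h, Multiset.count_singleton, Ne.symm hji]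
    · simp
  have hXxF : ∀ i, X.count (SpMAJ.xF i) = if b i then 0 else 1 := by
    intro i
    rw [hX, Multiset.count_sum', Finset.sum_eq_single i]
    · by_cases h : b i <;> simp [h]
    · intro j _ hji
      by_cases h : b j <;> simp [h, Multiset.count_singleton, Ne.symm hji]
    · simp
  have hXTX : XT X = t := by
    unfold XT
    rw [ht, Finset.card_filter]
    exact Finset.sum_congr rfl fun i _ => hXxT i
  have hXFX : XF X = n - t := by
    have h1 : XF X + XT X = n := by
      unfold XF XT
      rw [← Finset.sum_add_distrib]
      have : ∀ i ∈ (Finset.univ : Finset (Fin n)),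
          X.count (SpMAJ.xF i) + X.count (SpMAJ.xT i) = 1 := by
        intro i _
        rw [hXxT, hXxF]
        by_cases h : b i <;> simp [h]
      rw [Finset.sum_congr rfl this]
      simp
    omega
  -- step 1
  have hinit1 : s₁.count SpMAJ.bT = 0 ∧ s₁.count SpMAJ.bF = 0 ∧
      s₁.count SpMAJ.yT = 0 ∧ s₁.count SpMAJ.yF = 0 ∧ s₁.count SpMAJ.aF = XT s₁ + (n - t) ∧
      s₁.count SpMAJ.aT = XF s₁ + t := by
    have e1 := hX0 SpMAJ.bT (fun j => by simp)
    have e2 := hX0 SpMAJ.bF (fun j => by simp)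
    have e3 := hX0 SpMAJ.yT (fun j => by simp)
    have e4 := hX0 SpMAJ.yF (fun j => by simp)
    have e5 := hX0 SpMAJ.aF (fun j => by simp)
    have e6 := hX0 SpMAJ.aT (fun j => by simp)
    refine ⟨?_, ?_, ?_, ?_, ?_, ?_⟩ <;>
      simp [hs₁, Multiset.count_add, Multiset.count_nsmul, Multiset.count_singleton,
        XT_add, XF_add, XT_nsmul, XF_nsmul, e1, e2, e3, e4, e5, e6, hXTX, hXFX] <;>
      omega
  have hP1 := reaches_rec hr1 hinit1 (preserve1 (n - t) t)
  obtain ⟨g1, g2, g3, g4, g5, g6⟩ := hP1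
  -- terminal analysis of step 1
  have hXTc1 : XT c1 = 0 := by
    by_contra h
    obtain ⟨j, hj⟩ := XT_pos h
    have haF0 : c1.count SpMAJ.aF = 0 := terminal_zero hterm1 (by simp) (mem_rule1 j) hj
    have := count_le_XT j c1
    omega
  have hXFc1 : XF c1 = 0 := by
    by_contra h
    obtain ⟨j, hj⟩ := XF_pos h
    have haT0 : c1.count SpMAJ.aT = 0 := terminal_zero hterm1 (by simp) (mem_rule2 j) hj
    have := count_le_XF j c1
    omega
  have haFc1 : c1.count SpMAJ.aF = n - t := by omega
  have haTc1 : c1.count SpMAJ.aT = t := by omega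
  -- step 2
  have hinit2 : XT (c1 + s₂) = 0 ∧ XF (c1 + s₂) = 0 ∧
      (c1 + s₂).count SpMAJ.yT = 0 ∧ (c1 + s₂).count SpMAJ.yF = 0 ∧
      (c1 + s₂).count SpMAJ.aT + (n / 2) = (c1 + s₂).count SpMAJ.bF + t ∧
      (c1 + s₂).count SpMAJ.aF + (n / 2) = (c1 + s₂).count SpMAJ.bT + (n - t) := by
    refine ⟨?_, ?_, ?_, ?_, ?_, ?_⟩ <;>
      simp [hs₂, Multiset.count_add, Multiset.count_nsmul, Multiset.count_singleton,
        XT_add, XF_add, XT_nsmul, XF_nsmul, hXTc1, hXFc1, g1, g2, g3, g4, haFc1, haTc1] <;>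
      omega
  have hP2 := reaches_rec hr2 hinit2 (preserve2 (n / 2) t (n / 2) (n - t))
  obtain ⟨k1, k2, k3, k4, k5, k6⟩ := hP2
  constructor
  · -- majority true : n < 2 t
    intro hmaj
    -- terminal analysis of step 2
    have hbF2 : c2.count SpMAJ.bF = 0 := by
      by_contra h
      have haT : 1 ≤ c2.count SpMAJ.aT := by omega
      exact h (terminal_zero hterm2 (by simp) mem_rule3 haT)
    have haF2 : c2.count SpMAJ.aF = 0 := by
      by_contra h
      have hbT : 1 ≤ c2.count SpMAJ.bT := by omega
      have := terminal_zero hterm2 (by simp) mem_rule4 (Nat.one_le_iff_ne_zero.2 h)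
      omega
    -- step 3
    have hinit3 : XF (c2 + s₃) = 0 ∧ (c2 + s₃).count SpMAJ.aF = 0 ∧
        (c2 + s₃).count SpMAJ.bF = 0 ∧ (c2 + s₃).count SpMAJ.yT = 1 ∧
        (c2 + s₃).count SpMAJ.aT = (c2 + s₃).count SpMAJ.yF + (t - m - 1) := by
      refine ⟨?_, ?_, ?_, ?_, ?_⟩ <;>
        simp [hs₃, Multiset.count_add, Multiset.count_singleton,
          XF_add, XF_cons, k1, k2, k3, k4, haF2, hbF2] <;>
        omega
    have hP3 := reaches_rec hr3 hinit3 (preserve3T (t - m - 1))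
    obtain ⟨l1, l2, l3, l4, l5⟩ := hP3
    have hyF : T.count SpMAJ.yF = 0 := by
      by_contra h
      have haT : 1 ≤ T.count SpMAJ.aT := by omega
      exact h (terminal_zero hterm3 (by simp) mem_rule5 haT)
    exact ⟨by omega, hyF⟩
  · -- majority false : 2 t < n
    intro hmin
    -- terminal analysis of step 2
    have haT2 : c2.count SpMAJ.aT = 0 := by
      by_contra h
      have := terminal_zero hterm2 (by simp) mem_rule3 (Nat.one_le_iff_ne_zero.2 h)
      omega
    have hbT2 : c2.count SpMAJ.bT = 0 := by
      by_contra h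
      have haF : 1 ≤ c2.count SpMAJ.aF := by omega
      exact h (terminal_zero hterm2 (by simp) mem_rule4 haF)
    -- step 3
    have hinit3 : XT (c2 + s₃) = 0 ∧ (c2 + s₃).count SpMAJ.aT = 0 ∧
        (c2 + s₃).count SpMAJ.bT = 0 ∧ (c2 + s₃).count SpMAJ.yF = 1 ∧
        (c2 + s₃).count SpMAJ.aF = (c2 + s₃).count SpMAJ.yT + (m - t) := by
      refine ⟨?_, ?_, ?_, ?_, ?_⟩ <;>
        simp [hs₃, Multiset.count_add, Multiset.count_singleton,
          XT_add, XT_cons, k1, k2, k3, k4, haT2, hbT2] <;>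
        omega
    have hP3 := reaches_rec hr3 hinit3 (preserve3F (m - t))
    obtain ⟨l1, l2, l3, l4, l5⟩ := hP3
    have hyT : T.count SpMAJ.yT = 0 := by
      by_contra h
      have haF : 1 ≤ T.count SpMAJ.aF := by omega
      exact h (terminal_zero hterm3 (by simp) mem_rule6 haF)
    exact ⟨by omega, hyT⟩
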